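/- arXiv:1606.03257 — 3 statements merged into one kernel-verified Lean document; each statement's English description precedes it below -/
import Mathlib

section
/- Let G be a finite connected simple graph with at least two vertices, and let u, v be distinct non-adjacent vertices of G. Let G + uv denote the graph obtained from G by adding the edge uv. Then γ_cer(G + uv) ≤ γ_cer(G). -/
open Finset

variable {V : Type*} [Fintype V] [DecidableEq V]

/-- `D` is a dominating set of `G`: every vertex outside `D` has a neighbour in `D`. -/
def IsDomSet (G : SimpleGraph V) (D : Finset V) : Prop :=
  ∀ v ∉ D, ∃ u ∈ D, G.Adj u v

/-- `D` is a certified dominating set of `G`: it is dominating and every vertex of `D`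
has either zero or at least two neighbours outside `D`. -/
def IsCertDomSet (G : SimpleGraph V) [DecidableRel G.Adj] (D : Finset V) : Prop :=
  IsDomSet G D ∧ ∀ v ∈ D, (G.neighborFinset v \ D).card = 0 ∨ 2 ≤ (G.neighborFinset v \ D).card

/-- The domination number: minimum cardinality of a dominating set. -/
noncomputable def gamma (G : SimpleGraph V) : ℕ :=
  sInf {n | ∃ D : Finset V, IsDomSet G D ∧ D.card = n}

/-- The certified domination number: minimum cardinality of a certified dominating set. -/
noncomputable def gammaCer (G : SimpleGraph V) [DecidableRel G.Adj] : ℕ :=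
  sInf {n | ∃ D : Finset V, IsCertDomSet G D ∧ D.card = n}

/-- A leaf is a vertex of degree one. -/
abbrev IsLeaf (G : SimpleGraph V) [DecidableRel G.Adj] (v : V) : Prop := G.degree v = 1

/-- The set of leaf-neighbours of a vertex. -/
abbrev leafNbrs (G : SimpleGraph V) [DecidableRel G.Adj] (v : V) : Finset V :=
  (G.neighborFinset v).filter (fun l => G.degree l = 1)

/-- A weak support is a vertex adjacent to exactly one leaf. -/
abbrev IsWeakSupport (G : SimpleGraph V) [DecidableRel G.Adj] (v : V) : Prop :=
  (leafNbrs G v).card = 1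

/-- A strong support is a vertex adjacent to at least two leaves. -/
abbrev IsStrongSupport (G : SimpleGraph V) [DecidableRel G.Adj] (v : V) : Prop :=
  2 ≤ (leafNbrs G v).card

open SimpleGraph

/-!
Take a minimum certified dominating set `D` of `G`. It stays dominating in `G + uv`, and stays
certified unless one end `x` of `uv` lies in `D` together with all its `G`-neighbours while the
other end `y` lies outside `D`. Call the vertices of `D` without neighbours outside `D` enclosed.
By connectivity no nonempty set of enclosed vertices is closed under taking neighbours, and from
this one finds a nonempty set `T` of enclosed vertices, each with a neighbour outside `T`, such
that no enclosed vertex other than `x` keeps exactly one neighbour in `T` (induction on the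
vertices not yet known to have a neighbour outside, the case where all of them are leaves being
settled by a direct construction). Then `D \ T` is dominating; if `x ∈ T` or `x` has a neighbour
in `T`, it is certified in `G + uv` (`x` sees `y` and that neighbour outside), and otherwise it is
a certified dominating set of `G` smaller than `D`.
-/

lemma card_inter_union_ne_one {α : Type*} [DecidableEq α] {s W B : Finset α} (hWB : Disjoint W B)
    (hB : (s ∩ B).Nonempty ↔ #(s ∩ W) = 1) : #(s ∩ (W ∪ B)) ≠ 1 := by
  rw [inter_union_distrib_left,
    card_union_of_disjoint (disjoint_of_subset_left inter_subset_right
      (disjoint_of_subset_right inter_subset_right hWB))]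
  by_cases hW : #(s ∩ W) = 1
  · have := card_pos.2 (hB.2 hW)
    omega
  · rwa [not_nonempty_iff_eq_empty.1 (mt hB.1 hW), card_empty, add_zero]

section Removable

variable {G : SimpleGraph V} [DecidableRel G.Adj] {A F T : Finset V} {u x : V}

variable (G) in
/-- `T` can be deleted from a certified dominating set whose enclosed vertices form `A`, keeping
it certified dominating except possibly at `u`; the vertices of `F` are those granted a neighbour
outside `A`. -/
structure IsRemovable (A F : Finset V) (u : V) (T : Finset V) : Prop where
  subset : T ⊆ A
  nonempty : T.Nonempty
  mem_or_not_subset : ∀ t ∈ T, t ∈ F ∨ ¬ G.neighborFinset t ⊆ T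
  card_inter_ne_one : ∀ d ∈ A \ T, d ≠ u → #(G.neighborFinset d ∩ T) ≠ 1

lemma IsRemovable.exists_of_insert (hT : IsRemovable G A (insert x F) u T)
    (hx : x = u ∨ 2 ≤ #(G.neighborFinset x)) (hnbr : (G.neighborFinset x).Nonempty) :
    ∃ T', IsRemovable G A F u T' := by
  by_cases hxT : x ∈ T ∧ G.neighborFinset x ⊆ T
  · refine ⟨T.erase x, (erase_subset _ _).trans hT.subset, ?_, ?_, ?_⟩
    · obtain ⟨y, hy⟩ := hnbr
      exact ⟨y, mem_erase.2 ⟨fun h => G.notMem_neighborFinset_self x (h ▸ hy), hxT.2 hy⟩⟩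
    · intro t ht
      rcases hT.mem_or_not_subset t (mem_of_mem_erase ht) with h | h
      · exact Or.inl ((mem_insert.1 h).resolve_left (ne_of_mem_erase ht))
      · exact Or.inr fun hs => h (hs.trans (erase_subset _ _))
    · intro d hd hdu
      by_cases hdx : d = x
      · subst hdx
        have : G.neighborFinset d ∩ T.erase d = G.neighborFinset d :=
          inter_eq_left.2 fun y hy =>
            mem_erase.2 ⟨fun h => G.notMem_neighborFinset_self d (h ▸ hy), hxT.2 hy⟩
        rw [this]
        have := hx.resolve_left hdu
        omega
      · have hdT : d ∉ T := fun h => (mem_sdiff.1 hd).2 (mem_erase.2 ⟨hdx, h⟩)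
        have hxd : x ∉ G.neighborFinset d := fun h => hdT (hxT.2 (by simpa [G.adj_comm] using h))
        rw [inter_erase, erase_eq_of_notMem fun h => hxd (mem_inter.1 h).1]
        exact hT.card_inter_ne_one d (mem_sdiff.2 ⟨(mem_sdiff.1 hd).1, hdT⟩) hdu
  · refine ⟨T, hT.subset, hT.nonempty, fun t ht => ?_, hT.card_inter_ne_one⟩
    rcases hT.mem_or_not_subset t ht with h | h
    · rcases mem_insert.1 h with rfl | h
      · exact Or.inr fun hs => hxT ⟨ht, hs⟩
      · exact Or.inl h
    · exact Or.inr h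

lemma isRemovable_singleton {ℓ : V} (hℓ : ℓ ∈ A) (hℓu : G.neighborFinset ℓ = {u}) :
    IsRemovable G A F u {ℓ} := by
  have hu : u ∈ G.neighborFinset ℓ := hℓu ▸ mem_singleton_self u
  refine ⟨singleton_subset_iff.2 hℓ, singleton_nonempty ℓ, fun t ht => Or.inr ?_, ?_⟩
  · rw [mem_singleton.1 ht]
    exact fun h => G.notMem_neighborFinset_self ℓ (mem_singleton.1 (h hu) ▸ hu)
  · intro d _ hdu
    have hℓd : ℓ ∉ G.neighborFinset d := fun h =>
      hdu (mem_singleton.1 (hℓu ▸ by simpa [G.adj_comm] using h))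
    simp [inter_singleton_of_notMem hℓd]

lemma mem_of_neighborFinset_eq_singleton (hF : ∀ x ∈ A \ F, G.neighborFinset x ⊆ A)
    (hesc : ∀ B ⊆ A, B.Nonempty → ∃ t ∈ B, ¬ G.neighborFinset t ⊆ B)
    (hleaf : ∀ x ∈ A \ F, #(G.neighborFinset x) = 1) {ℓ s : V} (hℓ : ℓ ∈ A \ F)
    (hs : G.neighborFinset ℓ = {s}) : s ∈ F := by
  by_contra hsF
  have hsA : s ∈ A := hF ℓ hℓ (hs ▸ mem_singleton_self s)
  have hℓs : ℓ ∈ G.neighborFinset s := by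
    have : s ∈ G.neighborFinset ℓ := hs ▸ mem_singleton_self s
    simpa [G.adj_comm] using this
  have hsℓ : G.neighborFinset s = {ℓ} :=
    (eq_singleton_iff_unique_mem.2 ⟨hℓs, fun z hz =>
      card_le_one.1 (hleaf s (mem_sdiff.2 ⟨hsA, hsF⟩)).le z hz ℓ hℓs⟩)
  obtain ⟨t, ht, hnot⟩ := hesc {ℓ, s}
    (insert_subset (mem_sdiff.1 hℓ).1 (singleton_subset_iff.2 hsA)) (insert_nonempty _ _)
  rcases mem_insert.1 ht with rfl | ht
  · exact hnot (by simp [hs])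
  · rw [mem_singleton.1 ht, hsℓ] at hnot
    exact hnot (by simp)

lemma exists_isRemovable_of_leaves (hFA : F ⊆ A) (huF : u ∈ F)
    (hF : ∀ x ∈ A \ F, G.neighborFinset x ⊆ A)
    (hesc : ∀ B ⊆ A, B.Nonempty → ∃ t ∈ B, ¬ G.neighborFinset t ⊆ B)
    (hleaf : ∀ x ∈ A \ F, #(G.neighborFinset x) = 1) :
    ∃ T, IsRemovable G A F u T := by
  by_cases hu : ∃ ℓ ∈ A \ F, G.neighborFinset ℓ = {u}
  · obtain ⟨ℓ, hℓ, hℓu⟩ := hu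
    exact ⟨{ℓ}, isRemovable_singleton (mem_sdiff.1 hℓ).1 hℓu⟩
  push Not at hu
  -- `W`: the vertices of `F` carrying no leaf of `A \ F`; `B`: the leaves whose support has
  -- exactly one neighbour in `W`, which lifts that count to at least two.
  set W := F.filter fun w => ∀ ℓ ∈ A \ F, G.neighborFinset ℓ ≠ {w}
  set B := (A \ F).filter fun ℓ => ∀ s ∈ G.neighborFinset ℓ, #(G.neighborFinset s ∩ W) = 1
  have hsupport : ∀ ℓ ∈ A \ F, ∃ s, G.neighborFinset ℓ = {s} ∧ s ∉ W ∪ B := by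
    intro ℓ hℓ
    obtain ⟨s, hs⟩ := card_eq_one.1 (hleaf ℓ hℓ)
    refine ⟨s, hs, fun h => (mem_union.1 h).elim (fun h => (mem_filter.1 h).2 ℓ hℓ hs) ?_⟩
    exact fun h => (mem_sdiff.1 (mem_filter.1 h).1).2
      (mem_of_neighborFinset_eq_singleton hF hesc hleaf hℓ hs)
  refine ⟨W ∪ B,
    union_subset ((filter_subset _ _).trans hFA) ((filter_subset _ _).trans sdiff_subset),
    ⟨u, mem_union_left _ (mem_filter.2 ⟨huF, hu⟩)⟩, fun t ht => ?_, fun d hd _ => ?_⟩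
  · refine (mem_union.1 ht).imp (fun h => (mem_filter.1 h).1) fun h => ?_
    obtain ⟨s, hs, hsT⟩ := hsupport t (mem_filter.1 h).1
    exact fun hsub => hsT (hsub (hs ▸ mem_singleton_self s))
  obtain ⟨hdA, hdT⟩ := mem_sdiff.1 hd
  by_cases hdF : d ∈ F
  · have hWB : Disjoint W B := disjoint_of_subset_left (filter_subset _ _)
      (disjoint_of_subset_right (filter_subset _ _) disjoint_sdiff)
    refine card_inter_union_ne_one hWB ⟨fun ⟨b, hb⟩ => ?_, fun hW => ?_⟩
    · obtain ⟨hbd, hbB⟩ := mem_inter.1 hb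
      exact (mem_filter.1 hbB).2 d (by simpa [G.adj_comm] using hbd)
    · obtain ⟨ℓ, hℓ, hℓd⟩ : ∃ ℓ ∈ A \ F, G.neighborFinset ℓ = {d} := by
        by_contra! h
        exact hdT (mem_union_left _ (mem_filter.2 ⟨hdF, h⟩))
      have hℓN : ℓ ∈ G.neighborFinset d := by
        have : d ∈ G.neighborFinset ℓ := hℓd ▸ mem_singleton_self d
        simpa [G.adj_comm] using this
      refine ⟨ℓ, mem_inter.2 ⟨hℓN, mem_filter.2 ⟨hℓ, fun s hs => ?_⟩⟩⟩
      rw [hℓd, mem_singleton] at hs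
      rwa [hs]
  · obtain ⟨s, hs, hsT⟩ := hsupport d (mem_sdiff.2 ⟨hdA, hdF⟩)
    rw [hs, singleton_inter_of_notMem hsT, card_empty]
    exact zero_ne_one

lemma exists_isRemovable
    (hesc : ∀ B ⊆ A, B.Nonempty → ∃ t ∈ B, ¬ G.neighborFinset t ⊆ B) (hu : u ∈ A)
    (hFA : F ⊆ A) (hF : ∀ x ∈ A \ F, G.neighborFinset x ⊆ A) :
    ∃ T, IsRemovable G A F u T := by
  have hnbr : ∀ x ∈ A, (G.neighborFinset x).Nonempty := fun x hx => by
    obtain ⟨t, ht, hnot⟩ := hesc {x} (singleton_subset_iff.2 hx) (singleton_nonempty x)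
    rw [mem_singleton.1 ht] at hnot
    obtain ⟨y, hy, -⟩ := not_subset.1 hnot
    exact ⟨y, hy⟩
  induction hn : #(A \ F) using Nat.strong_induction_on generalizing F with | _ n ih => ?_
  by_cases hx : ∃ x ∈ A \ F, x = u ∨ 2 ≤ #(G.neighborFinset x)
  · obtain ⟨x, hx, hxu⟩ := hx
    have hlt : #(A \ insert x F) < n := hn ▸ sdiff_insert A F x ▸ card_erase_lt_of_mem hx
    obtain ⟨T, hT⟩ := ih _ hlt (insert_subset (mem_sdiff.1 hx).1 hFA)
      (fun y hy => hF y (sdiff_subset_sdiff subset_rfl (subset_insert x F) hy)) rfl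
    exact hT.exists_of_insert hxu (hnbr x (mem_sdiff.1 hx).1)
  · push Not at hx
    have huF : u ∈ F := by_contra fun h => (hx u (mem_sdiff.2 ⟨hu, h⟩)).1 rfl
    refine exists_isRemovable_of_leaves hFA huF hF hesc fun x hx' => ?_
    have := card_pos.2 (hnbr x (mem_sdiff.1 hx').1)
    have := (hx x hx').2
    omega

lemma exists_removable_subset
    (hesc : ∀ B ⊆ A, B.Nonempty → ∃ t ∈ B, ¬ G.neighborFinset t ⊆ B) (hu : u ∈ A) :
    ∃ T ⊆ A, T.Nonempty ∧ (∀ t ∈ T, ¬ G.neighborFinset t ⊆ T) ∧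
      ∀ d ∈ A \ T, d ≠ u → #(G.neighborFinset d ∩ T) ≠ 1 := by
  obtain ⟨T, hT⟩ := exists_isRemovable hesc hu
    (filter_subset (fun x => ¬ G.neighborFinset x ⊆ A) A) fun x hx =>
      by_contra fun h => (mem_sdiff.1 hx).2 (mem_filter.2 ⟨(mem_sdiff.1 hx).1, h⟩)
  refine ⟨T, hT.subset, hT.nonempty, fun t ht => ?_, hT.card_inter_ne_one⟩
  rcases hT.mem_or_not_subset t ht with h | h
  · exact fun hs => (mem_filter.1 h).2 (hs.trans hT.subset)
  · exact h

end Removable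

lemma IsDomSet.mono {α : Type*} {G H : SimpleGraph α} {D : Finset α} (hGH : G ≤ H)
    (hD : IsDomSet G D) : IsDomSet H D :=
  fun x hx => (hD x hx).imp fun _ h => ⟨h.1, hGH h.2⟩

section Certified

variable {G : SimpleGraph V} [DecidableRel G.Adj] {D T : Finset V} {u v x y : V}

lemma isCertDomSet_iff :
    IsCertDomSet G D ↔ IsDomSet G D ∧ ∀ x ∈ D, #(G.neighborFinset x \ D) ≠ 1 :=
  and_congr_right fun _ => forall₂_congr fun _ _ => by omega

lemma isCertDomSet_univ : IsCertDomSet G univ :=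
  ⟨fun x hx => absurd (mem_univ x) hx, fun x _ => Or.inl (by simp)⟩

lemma gammaCer_le (hD : IsCertDomSet G D) : gammaCer G ≤ #D :=
  Nat.sInf_le ⟨D, hD, rfl⟩

lemma exists_isCertDomSet_card_eq_gammaCer : ∃ D, IsCertDomSet G D ∧ #D = gammaCer G :=
  Nat.sInf_mem (s := {n | ∃ D, IsCertDomSet G D ∧ #D = n}) ⟨_, univ, isCertDomSet_univ, rfl⟩

variable (G) in
def enclosed (D : Finset V) : Finset V :=
  D.filter fun x => G.neighborFinset x ⊆ D

lemma mem_enclosed : x ∈ enclosed G D ↔ x ∈ D ∧ G.neighborFinset x ⊆ D := mem_filter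

lemma enclosed_subset : enclosed G D ⊆ D := filter_subset _ _

lemma exists_mem_enclosed_adj_of_not_isCertDomSet {H : SimpleGraph V} [DecidableRel H.Adj]
    (hGH : G ≤ H) (hD : IsCertDomSet G D) (hH : ¬ IsCertDomSet H D) :
    ∃ x ∈ enclosed G D, ∃ y ∉ D, H.Adj x y := by
  by_contra! h
  refine hH ⟨hD.1.mono hGH, fun x hx => ?_⟩
  by_cases hxD : G.neighborFinset x ⊆ D
  · refine Or.inl (card_eq_zero.2 (sdiff_eq_empty_iff_subset.2 fun y hy => ?_))
    by_contra hyD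
    exact h x (mem_enclosed.2 ⟨hx, hxD⟩) y hyD ((H.mem_neighborFinset x y).1 hy)
  · have h2 := (hD.2 x hx).resolve_left fun h0 =>
      hxD (sdiff_eq_empty_iff_subset.1 (card_eq_zero.1 h0))
    refine Or.inr (h2.trans (card_le_card (sdiff_subset_sdiff (fun y hy => ?_) subset_rfl)))
    simpa using hGH (by simpa using hy)

lemma exists_removable_enclosed (hG : G.Connected) (hx : x ∈ enclosed G D) {y : V}
    (hy : y ∉ D) :
    ∃ T ⊆ enclosed G D, T.Nonempty ∧ (∀ t ∈ T, ¬ G.neighborFinset t ⊆ T) ∧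
      ∀ d ∈ enclosed G D \ T, d ≠ x → #(G.neighborFinset d ∩ T) ≠ 1 := by
  refine exists_removable_subset (fun B hB ⟨b, hb⟩ => ?_) hx
  have hyB : y ∉ (B : Set V) := fun h => hy (mem_enclosed.1 (hB h)).1
  obtain ⟨d, -, hd, hd'⟩ := (hG.preconnected b y).some.exists_boundary_dart _ hb hyB
  exact ⟨d.fst, hd, fun h => hd' (h ((G.mem_neighborFinset _ _).2 d.adj))⟩

lemma isDomSet_sdiff (hD : IsDomSet G D) (hT : T ⊆ enclosed G D)
    (hexit : ∀ t ∈ T, ¬ G.neighborFinset t ⊆ T) : IsDomSet G (D \ T) := by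
  intro w hw
  by_cases hwD : w ∈ D
  · have hwT : w ∈ T := by_contra fun h => hw (mem_sdiff.2 ⟨hwD, h⟩)
    obtain ⟨z, hz, hzT⟩ := not_subset.1 (hexit w hwT)
    exact ⟨z, mem_sdiff.2 ⟨(mem_enclosed.1 (hT hwT)).2 hz, hzT⟩,
      ((G.mem_neighborFinset _ _).1 hz).symm⟩
  · obtain ⟨d, hd, hdw⟩ := hD w hwD
    refine ⟨d, mem_sdiff.2 ⟨hd, fun hdT => hwD ?_⟩, hdw⟩
    exact (mem_enclosed.1 (hT hdT)).2 ((G.mem_neighborFinset _ _).2 hdw)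

lemma card_neighborFinset_sdiff_sdiff_ne_one (hD : IsCertDomSet G D) {d : V} (hd : d ∈ D)
    (hd0 : d ∈ enclosed G D → #(G.neighborFinset d ∩ T) ≠ 1) :
    #(G.neighborFinset d \ (D \ T)) ≠ 1 := by
  by_cases hdN : G.neighborFinset d ⊆ D
  · have : G.neighborFinset d \ (D \ T) = G.neighborFinset d ∩ T := by
      ext z
      simp only [mem_sdiff, mem_inter, not_and, not_not]
      exact ⟨fun h => ⟨h.1, h.2 (hdN h.1)⟩, fun h => ⟨h.1, fun _ => h.2⟩⟩
    rw [this]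
    exact hd0 (mem_enclosed.2 ⟨hd, hdN⟩)
  · have h2 := (hD.2 d hd).resolve_left fun h0 =>
      hdN (sdiff_eq_empty_iff_subset.1 (card_eq_zero.1 h0))
    have := card_le_card
      (sdiff_subset_sdiff (subset_refl (G.neighborFinset d)) (sdiff_subset : D \ T ⊆ D))
    omega

lemma neighborFinset_sup_edge_of_ne (hxy : (edge u v).Adj x y) {d : V} (hdx : d ≠ x)
    (hdy : d ≠ y) : (G ⊔ edge u v).neighborFinset d = G.neighborFinset d := by
  ext w
  rw [edge_adj] at hxy
  simp only [mem_neighborFinset, sup_adj, edge_adj, or_iff_left_iff_imp]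
  rintro ⟨(⟨rfl, rfl⟩ | ⟨rfl, rfl⟩), -⟩ <;> grind

lemma isCertDomSet_sup_edge_sdiff (hD : IsCertDomSet G D) (hT : T ⊆ enclosed G D)
    (hexit : ∀ t ∈ T, ¬ G.neighborFinset t ⊆ T)
    (hcard : ∀ d ∈ enclosed G D \ T, d ≠ x → #(G.neighborFinset d ∩ T) ≠ 1)
    (hy : y ∉ D) (hxy : (edge u v).Adj x y)
    (hxT : x ∈ T ∨ (G.neighborFinset x ∩ T).Nonempty) :
    IsCertDomSet (G ⊔ edge u v) (D \ T) := by
  refine isCertDomSet_iff.2 ⟨(isDomSet_sdiff hD.1 hT hexit).mono le_sup_left, fun d hd => ?_⟩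
  obtain ⟨hdD, hdT⟩ := mem_sdiff.1 hd
  by_cases hdx : d = x
  · subst hdx
    obtain ⟨t, ht⟩ := hxT.resolve_left hdT
    obtain ⟨htN, htT⟩ := mem_inter.1 ht
    have htD : t ∈ D := (mem_enclosed.1 (hT htT)).1
    refine (one_lt_card.2 ⟨y, mem_sdiff.2 ⟨?_, fun h => hy (mem_sdiff.1 h).1⟩,
      t, mem_sdiff.2 ⟨?_, fun h => (mem_sdiff.1 h).2 htT⟩, fun h => hy (h ▸ htD)⟩).ne'
    · simpa using Or.inr hxy
    · simpa using Or.inl ((G.mem_neighborFinset _ _).1 htN)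
  · rw [neighborFinset_sup_edge_of_ne hxy hdx fun h => hy (h ▸ hdD)]
    exact card_neighborFinset_sdiff_sdiff_ne_one hD hdD fun hd0 =>
      hcard d (mem_sdiff.2 ⟨hd0, hdT⟩) hdx

lemma isCertDomSet_sdiff (hD : IsCertDomSet G D) (hT : T ⊆ enclosed G D)
    (hexit : ∀ t ∈ T, ¬ G.neighborFinset t ⊆ T)
    (hcard : ∀ d ∈ enclosed G D \ T, d ≠ x → #(G.neighborFinset d ∩ T) ≠ 1)
    (hxT : G.neighborFinset x ∩ T = ∅) : IsCertDomSet G (D \ T) := by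
  refine isCertDomSet_iff.2 ⟨isDomSet_sdiff hD.1 hT hexit, fun d hd => ?_⟩
  refine card_neighborFinset_sdiff_sdiff_ne_one hD (mem_sdiff.1 hd).1 fun hd0 => ?_
  by_cases hdx : d = x
  · rw [hdx, hxT, card_empty]
    exact zero_ne_one
  · exact hcard d (mem_sdiff.2 ⟨hd0, (mem_sdiff.1 hd).2⟩) hdx

end Certified

theorem gammaCer_addEdge_le_general (G : SimpleGraph V) [DecidableRel G.Adj]
    (hconn : G.Connected) (u v : V) :
    gammaCer (G ⊔ SimpleGraph.edge u v) ≤ gammaCer G := by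
  obtain ⟨D, hD, hDcard⟩ := exists_isCertDomSet_card_eq_gammaCer (G := G)
  rw [← hDcard]
  by_cases hH : IsCertDomSet (G ⊔ edge u v) D
  · exact gammaCer_le hH
  obtain ⟨x, hx, y, hy, hxy⟩ := exists_mem_enclosed_adj_of_not_isCertDomSet le_sup_left hD hH
  have hxy : (edge u v).Adj x y := hxy.resolve_left fun h =>
    hy ((mem_enclosed.1 hx).2 ((G.mem_neighborFinset _ _).2 h))
  obtain ⟨T, hT, hTne, hexit, hcard⟩ := exists_removable_enclosed hconn hx hy
  by_cases hxT : x ∈ T ∨ (G.neighborFinset x ∩ T).Nonempty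
  · exact (gammaCer_le (isCertDomSet_sup_edge_sdiff hD hT hexit hcard hy hxy hxT)).trans
      (card_le_card sdiff_subset)
  · have hGT := gammaCer_le (isCertDomSet_sdiff hD hT hexit hcard
      (not_nonempty_iff_eq_empty.1 fun h => hxT (Or.inr h)))
    have := card_lt_card (sdiff_ssubset (hT.trans enclosed_subset) hTne)
    omega

theorem gammaCer_addEdge_le (G : SimpleGraph V) [DecidableRel G.Adj]
    (hconn : G.Connected) (hcard : 2 ≤ Fintype.card V)
    (u v : V) (huv : u ≠ v) (hnadj : ¬ G.Adj u v) :
    gammaCer (G ⊔ SimpleGraph.edge u v) ≤ gammaCer G :=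
  gammaCer_addEdge_le_general G hconn u v
end

section
/- Let G be a finite simple graph and let v be a vertex of G that is not a leaf (the degree of v in G is not equal to one). Let G − v denote the induced subgraph of G on the vertices other than v. Then γ_cer(G) ≤ γ_cer(G − v) + 1. (Equivalently: adding a non-leaf vertex to a graph increases the certified domination number by at most one.) -/
open Finset

variable {V : Type*} [Fintype V] [DecidableEq V]

/-!
Take a minimum certified dominating set `D` of `G - v`. If `v` has zero or at least two
neighbours outside `D`, then `D ∪ {v}` works. Otherwise `D` dominates `v`, as `v` is not a leaf,
and the trouble comes from the vertices of `D` enclosed in `D ∪ {v}` (with no neighbour outside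
it) that are adjacent to `v`. We remove ("expose") from `D ∪ {v}` a set `X` of enclosed vertices,
possibly with `v`, chosen by a greedy process in the graph induced on the enclosed vertices and
`v`: a vertex that sees exactly one exposed vertex either gets a second one, by exposing a fresh
neighbour, or is exposed itself. Vertices that must never be exposed (supports of leaves, and
vertices already repaired) are recorded, so that every exposed vertex stays dominated, and the
process ends with no remaining vertex other than `v` seeing exactly one exposed vertex.
-/

namespace CertifiedDomination

open SimpleGraph

section Exposure

variable {H : SimpleGraph V} [DecidableRel H.Adj] {r : V}

def IsNonRootLeaf (H : SimpleGraph V) [DecidableRel H.Adj] (r l : V) : Prop :=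
  IsLeaf H l ∧ l ≠ r

def IsNonRootSupport (H : SimpleGraph V) [DecidableRel H.Adj] (r s : V) : Prop :=
  ∃ l, IsNonRootLeaf H r l ∧ H.Adj s l

lemma card_neighborFinset_inter_insert {X : Finset V} {k y : V} (hky : H.Adj k y) (hy : y ∉ X) :
    #(H.neighborFinset k ∩ insert y X) = #(H.neighborFinset k ∩ X) + 1 := by
  rw [inter_insert_of_mem ((H.mem_neighborFinset k y).mpr hky), card_insert_of_notMem]
  exact fun h => hy (mem_inter.mp h).2

lemma card_neighborFinset_inter_mono {X Y : Finset V} (h : X ⊆ Y) (k : V) :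
    #(H.neighborFinset k ∩ X) ≤ #(H.neighborFinset k ∩ Y) :=
  card_le_card (inter_subset_inter_left h)

/-- A state of the greedy process: `X` is the exposed set and `M` the set of vertices that will
never be exposed. A vertex of `M` sees two exposed vertices already, or keeps a leaf that can still
be exposed for it. -/
structure ExposureInv (H : SimpleGraph V) [DecidableRel H.Adj] (r : V) (X M : Finset V) :
    Prop where
  disjoint : Disjoint X M
  support_mem : ∀ s, IsNonRootSupport H r s → s ∈ M
  exists_adj_mem : ∀ x ∈ X, ∃ m ∈ M, H.Adj x m
  root_adj : r ∉ X → ∃ x ∈ X, H.Adj r x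
  guarded : ∀ m ∈ M, m ≠ r →
    2 ≤ #(H.neighborFinset m ∩ X) ∨ ∃ l ∉ X, IsNonRootLeaf H r l ∧ H.Adj m l

namespace ExposureInv

variable {X M : Finset V}

lemma not_isNonRootLeaf (hI : ExposureInv H r X M) {k : V}
    (hk : #(H.neighborFinset k ∩ X) = 1) : ¬ IsNonRootLeaf H r k := by
  intro hleaf
  obtain ⟨a, ha⟩ := card_eq_one.mp hk
  obtain ⟨hka, haX⟩ := mem_inter.mp (ha ▸ mem_singleton_self a)
  rw [mem_neighborFinset] at hka
  exact disjoint_left.mp hI.disjoint haX (hI.support_mem a ⟨k, hleaf, hka.symm⟩)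

lemma notMem_and_exists_adj_mem (hI : ExposureInv H r X M) {k : V} (hkr : k ≠ r)
    (hk : #(H.neighborFinset k ∩ X) = 1) (hnbr : ∀ y, H.Adj k y → y ∈ X ∨ y ∈ M) :
    k ∉ M ∧ ∃ m ∈ M, H.Adj k m := by
  have hleaf : ¬ IsNonRootLeaf H r k := hI.not_isNonRootLeaf hk
  have hout : ∃ b, H.Adj k b ∧ b ∉ X := by
    by_contra! h
    have hsub : H.neighborFinset k ⊆ X := fun b hb => h b ((H.mem_neighborFinset k b).mp hb)
    rw [inter_eq_left.mpr hsub] at hk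
    exact hleaf ⟨hk, hkr⟩
  obtain ⟨b, hkb, hbX⟩ := hout
  refine ⟨fun hkM => ?_, b, (hnbr b hkb).resolve_left hbX, hkb⟩
  rcases hI.guarded k hkM hkr with h2 | ⟨l, hlX, hl, hkl⟩
  · omega
  have hlM : l ∈ M := (hnbr l hkl).resolve_left hlX
  rcases hI.guarded l hlM hl.2 with h2 | ⟨l', _, hl', hll'⟩
  · have : #(H.neighborFinset l ∩ X) ≤ 1 := hl.1 ▸ card_le_card inter_subset_left
    omega
  exact hleaf ((degree_eq_one_iff_existsUnique_adj.mp hl.1).unique hkl.symm hll' ▸ hl')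

lemma insert_insert (hI : ExposureInv H r X M) {k y : V} (hkX : k ∉ X)
    (hk : #(H.neighborFinset k ∩ X) = 1) (hky : H.Adj k y) (hyX : y ∉ X) (hyM : y ∉ M) :
    ExposureInv H r (insert y X) (insert k M) := by
  have hk2 : #(H.neighborFinset k ∩ insert y X) = 2 := by
    rw [card_neighborFinset_inter_insert hky hyX, hk]
  refine ⟨?_, fun s hs => mem_insert_of_mem (hI.support_mem s hs), ?_, ?_, ?_⟩
  · refine disjoint_insert_left.mpr ⟨?_, disjoint_insert_right.mpr ⟨hkX, hI.disjoint⟩⟩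
    simp only [mem_insert, not_or]
    exact ⟨hky.ne.symm, hyM⟩
  · intro x hx
    rcases mem_insert.mp hx with rfl | hx
    · exact ⟨k, mem_insert_self k M, hky.symm⟩
    · obtain ⟨m, hm, hxm⟩ := hI.exists_adj_mem x hx
      exact ⟨m, mem_insert_of_mem hm, hxm⟩
  · intro hr
    obtain ⟨x, hx, hrx⟩ := hI.root_adj fun h => hr (mem_insert_of_mem h)
    exact ⟨x, mem_insert_of_mem hx, hrx⟩
  · intro m hm hmr
    by_cases hmk : m = k
    · exact Or.inl (hmk ▸ hk2.ge)
    rcases hI.guarded m ((mem_insert.mp hm).resolve_left hmk) hmr with h2 | ⟨l, hlX, hl, hml⟩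
    · exact Or.inl (h2.trans (card_neighborFinset_inter_mono (subset_insert y X) m))
    · refine Or.inr ⟨l, ?_, hl, hml⟩
      intro hlX'
      rcases mem_insert.mp hlX' with rfl | hlX'
      · exact hmk ((degree_eq_one_iff_existsUnique_adj.mp hl.1).unique hml.symm hky.symm)
      · exact hlX hlX'

lemma insert_left (hI : ExposureInv H r X M) {k m : V} (hk : #(H.neighborFinset k ∩ X) = 1)
    (hkM : k ∉ M) (hmM : m ∈ M) (hkm : H.Adj k m) :
    ExposureInv H r (insert k X) M := by
  refine ⟨disjoint_insert_left.mpr ⟨hkM, hI.disjoint⟩, hI.support_mem, ?_, ?_, ?_⟩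
  · intro x hx
    rcases mem_insert.mp hx with rfl | hx
    · exact ⟨m, hmM, hkm⟩
    · exact hI.exists_adj_mem x hx
  · intro hr
    obtain ⟨x, hx, hrx⟩ := hI.root_adj fun h => hr (mem_insert_of_mem h)
    exact ⟨x, mem_insert_of_mem hx, hrx⟩
  · intro m' hm' hm'r
    rcases hI.guarded m' hm' hm'r with h2 | ⟨l, hlX, hl, hml⟩
    · exact Or.inl (h2.trans (card_neighborFinset_inter_mono (subset_insert k X) m'))
    · refine Or.inr ⟨l, ?_, hl, hml⟩
      intro hlX'
      rcases mem_insert.mp hlX' with rfl | hlX'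
      · exact hI.not_isNonRootLeaf hk hl
      · exact hlX hlX'

lemma exists_card_lt_of_violator (hI : ExposureInv H r X M) {k : V} (hkX : k ∉ X) (hkr : k ≠ r)
    (hk : #(H.neighborFinset k ∩ X) = 1) :
    ∃ X' M', ExposureInv H r X' M' ∧ #X < #X' := by
  by_cases hhelp : ∃ y, H.Adj k y ∧ y ∉ X ∧ y ∉ M
  · obtain ⟨y, hky, hyX, hyM⟩ := hhelp
    exact ⟨_, _, hI.insert_insert hkX hk hky hyX hyM, by rw [card_insert_of_notMem hyX]; omega⟩
  · have hnbr : ∀ y, H.Adj k y → y ∈ X ∨ y ∈ M := by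
      intro y hy
      by_contra! h
      exact hhelp ⟨y, hy, h⟩
    obtain ⟨hkM, m, hmM, hkm⟩ := hI.notMem_and_exists_adj_mem hkr hk hnbr
    exact ⟨_, _, hI.insert_left hk hkM hmM hkm, by rw [card_insert_of_notMem hkX]; omega⟩

end ExposureInv

lemma exists_exposureInv {w : V} (hrw : H.Adj r w) : ∃ X M, ExposureInv H r X M := by
  classical
  set S := univ.filter (IsNonRootSupport H r)
  have hS : ∀ s, s ∈ S ↔ IsNonRootSupport H r s := by simp [S]
  by_cases hw : ∃ u, H.Adj r u ∧ ¬ IsNonRootSupport H r u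
  · obtain ⟨u, hru, hu⟩ := hw
    refine ⟨{u}, insert r S, ?_, fun s hs => mem_insert_of_mem ((hS s).mpr hs), ?_, ?_, ?_⟩
    · simp only [disjoint_singleton_left, mem_insert, not_or, hS]
      exact ⟨hru.ne.symm, hu⟩
    · intro x hx
      rw [mem_singleton.mp hx]
      exact ⟨r, mem_insert_self r S, hru.symm⟩
    · exact fun _ => ⟨u, mem_singleton_self u, hru⟩
    · intro m hm hmr
      obtain ⟨l, hl, hml⟩ := (hS m).mp ((mem_insert.mp hm).resolve_left hmr)
      refine Or.inr ⟨l, fun hlu => hmr ?_, hl, hml⟩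
      rw [mem_singleton] at hlu
      exact (degree_eq_one_iff_existsUnique_adj.mp hl.1).unique hml.symm (hlu ▸ hru.symm)
  · push Not at hw
    have hr : ¬ IsNonRootSupport H r r := by
      rintro ⟨l, hl, hrl⟩
      obtain ⟨l', hl', hll'⟩ := hw l hrl
      exact hl'.2 ((degree_eq_one_iff_existsUnique_adj.mp hl.1).unique hll' hrl.symm)
    refine ⟨{r}, S, ?_, fun s hs => (hS s).mpr hs, ?_, fun h => absurd (mem_singleton_self r) h,
      ?_⟩
    · simpa [hS] using hr
    · intro x hx
      rw [mem_singleton.mp hx]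
      exact ⟨w, (hS w).mpr (hw w hrw), hrw⟩
    · intro m hm _
      obtain ⟨l, hl, hml⟩ := (hS m).mp hm
      exact Or.inr ⟨l, fun hlr => hl.2 (mem_singleton.mp hlr), hl, hml⟩

theorem exists_exposure {w : V} (hrw : H.Adj r w) :
    ∃ X : Finset V, (∀ x ∈ X, ∃ y ∉ X, H.Adj x y) ∧ (r ∉ X → ∃ x ∈ X, H.Adj r x) ∧
      ∀ k ∉ X, k ≠ r → #(H.neighborFinset k ∩ X) ≠ 1 := by
  classical
  obtain ⟨X₀, M₀, hI₀⟩ := exists_exposureInv hrw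
  obtain ⟨⟨X, M⟩, hI, hmax⟩ := exists_max_image
    (univ.filter fun p : Finset V × Finset V => ExposureInv H r p.1 p.2) (fun p => #p.1)
    ⟨(X₀, M₀), by simpa using hI₀⟩
  simp only [mem_filter, mem_univ, true_and, Prod.forall] at hI hmax
  refine ⟨X, fun x hx => ?_, hI.root_adj, fun k hkX hkr hk => ?_⟩
  · obtain ⟨m, hm, hxm⟩ := hI.exists_adj_mem x hx
    exact ⟨m, disjoint_right.mp hI.disjoint hm, hxm⟩
  · obtain ⟨X', M', hI', hlt⟩ := hI.exists_card_lt_of_violator hkX hkr hk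
    exact absurd (hmax X' M' hI') (not_le.mpr hlt)

end Exposure

section Repair

variable {G : SimpleGraph V} [DecidableRel G.Adj] {v : V} {D : Finset V}

/-- A certified dominating set of `G - v`, seen as a set of vertices of `G`. -/
structure IsCertDomSetDel (G : SimpleGraph V) [DecidableRel G.Adj] (v : V) (D : Finset V) :
    Prop where
  notMem : v ∉ D
  dom : ∀ x ∉ insert v D, ∃ d ∈ D, G.Adj d x
  cert : ∀ d ∈ D, #(G.neighborFinset d \ insert v D) ≠ 1

def enclosed (G : SimpleGraph V) [DecidableRel G.Adj] (v : V) (D : Finset V) : Finset V :=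
  D.filter fun d => G.neighborFinset d ⊆ insert v D

structure IsAdmissibleExposure (G : SimpleGraph V) [DecidableRel G.Adj] (v : V)
    (D X : Finset V) : Prop where
  subset : X ⊆ insert v (enclosed G v D)
  dominated : ∀ x ∈ X, ∃ y ∈ insert v D \ X, G.Adj x y
  card_inter_ne_one : ∀ z ∈ enclosed G v D, z ∉ X → #(G.neighborFinset z ∩ X) ≠ 1
  root : v ∉ X → #(G.neighborFinset v \ (insert v D \ X)) ≠ 1

lemma isCertDomSet_iff {D : Finset V} :
    IsCertDomSet G D ↔ IsDomSet G D ∧ ∀ d ∈ D, #(G.neighborFinset d \ D) ≠ 1 := by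
  refine and_congr Iff.rfl (forall₂_congr fun d _ => ?_)
  omega

lemma IsAdmissibleExposure.isCertDomSet {X : Finset V} (hD : IsCertDomSetDel G v D)
    (hX : IsAdmissibleExposure G v D X) : IsCertDomSet G (insert v D \ X) := by
  refine isCertDomSet_iff.mpr ⟨fun x hx => ?_, fun d hd => ?_⟩
  · by_cases hxX : x ∈ X
    · obtain ⟨y, hy, hxy⟩ := hX.dominated x hxX
      exact ⟨y, hy, hxy.symm⟩
    have hxD : x ∉ insert v D := fun h => hx (mem_sdiff.mpr ⟨h, hxX⟩)
    obtain ⟨d, hd, hdx⟩ := hD.dom x hxD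
    refine ⟨d, mem_sdiff.mpr ⟨mem_insert_of_mem hd, fun hdX => hxD ?_⟩, hdx⟩
    have hdZ : d ∈ enclosed G v D :=
      (mem_insert.mp (hX.subset hdX)).resolve_left fun h => hD.notMem (h ▸ hd)
    exact (mem_filter.mp hdZ).2 ((G.mem_neighborFinset d x).mpr hdx)
  obtain ⟨hd, hdX⟩ := mem_sdiff.mp hd
  rcases mem_insert.mp hd with rfl | hd
  · exact hX.root hdX
  by_cases hdZ : d ∈ enclosed G v D
  · have hsub := (mem_filter.mp hdZ).2
    have : G.neighborFinset d \ (insert v D \ X) = G.neighborFinset d ∩ X := by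
      ext x
      simp only [mem_sdiff, mem_inter, not_and, not_not]
      exact ⟨fun h => ⟨h.1, h.2 (hsub h.1)⟩, fun h => ⟨h.1, fun _ => h.2⟩⟩
    exact this ▸ hX.card_inter_ne_one d hdZ hdX
  · have hne : (G.neighborFinset d \ insert v D).Nonempty :=
      sdiff_nonempty.mpr fun h => hdZ (mem_filter.mpr ⟨hd, h⟩)
    have h2 : 2 ≤ #(G.neighborFinset d \ insert v D) := by
      have := hD.cert d hd
      have := hne.card_pos
      omega
    have : 2 ≤ #(G.neighborFinset d \ (insert v D \ X)) :=
      h2.trans (card_le_card (sdiff_subset_sdiff subset_rfl sdiff_subset))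
    omega

lemma isAdmissibleExposure_empty (hU : #(G.neighborFinset v \ D) ≠ 1) :
    IsAdmissibleExposure G v D ∅ where
  subset := empty_subset _
  dominated := by simp
  card_inter_ne_one := by simp
  root _ := by
    rwa [sdiff_empty, sdiff_insert_of_notMem (G.notMem_neighborFinset_self v)]

lemma exists_adj_mem_of_card_sdiff_eq_one (hv : G.degree v ≠ 1)
    (hU : #(G.neighborFinset v \ D) = 1) : ∃ d ∈ D, G.Adj v d := by
  by_contra! h
  refine hv (hU ▸ congrArg card (sdiff_eq_self_of_disjoint ?_)).symm
  exact disjoint_left.mpr fun d hd hdD => h d hdD ((G.mem_neighborFinset v d).mp hd)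

lemma isAdmissibleExposure_singleton {d : V} (hd : d ∈ D) (hvd : G.Adj v d)
    (hZ : ∀ z ∈ enclosed G v D, ¬ G.Adj v z) : IsAdmissibleExposure G v D {v} where
  subset := singleton_subset_iff.mpr (mem_insert_self v _)
  dominated x hx := by
    rw [mem_singleton.mp hx]
    refine ⟨d, mem_sdiff.mpr ⟨mem_insert_of_mem hd, fun h => ?_⟩, hvd⟩
    exact hvd.ne (mem_singleton.mp h).symm
  card_inter_ne_one z hz _ := by
    rw [inter_singleton_of_notMem fun h => hZ z hz ((G.mem_neighborFinset z v).mp h).symm]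
    simp
  root h := absurd (mem_singleton_self v) h

lemma exists_isAdmissibleExposure_of_adj (hD : IsCertDomSetDel G v D)
    (hU : #(G.neighborFinset v \ D) = 1) {w : V} (hw : w ∈ enclosed G v D) (hvw : G.Adj v w) :
    ∃ X, IsAdmissibleExposure G v D X := by
  classical
  set T := insert v (enclosed G v D)
  set H := (G.induce (T : Set V)).spanningCoe
  have hH : ∀ x y, H.Adj x y ↔ G.Adj x y ∧ x ∈ T ∧ y ∈ T := by simp [H]
  have hTD : T ⊆ insert v D := insert_subset_insert v (filter_subset _ D)
  obtain ⟨X, hXdom, hXroot, hXcard⟩ :=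
    exists_exposure ((hH v w).mpr ⟨hvw, mem_insert_self v _, mem_insert_of_mem hw⟩)
  have hXT : X ⊆ T := fun x hx => by
    obtain ⟨y, -, hxy⟩ := hXdom x hx
    exact ((hH x y).mp hxy).2.1
  refine ⟨X, hXT, fun x hx => ?_, fun z hz hzX => ?_, fun hvX => ?_⟩
  · obtain ⟨y, hyX, hxy⟩ := hXdom x hx
    obtain ⟨hxy, -, hyT⟩ := (hH x y).mp hxy
    exact ⟨y, mem_sdiff.mpr ⟨hTD hyT, hyX⟩, hxy⟩
  · have hzv : z ≠ v := fun h => hD.notMem (h ▸ (mem_filter.mp hz).1)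
    have : G.neighborFinset z ∩ X = H.neighborFinset z ∩ X := by
      ext x
      simp only [mem_inter, mem_neighborFinset, hH]
      exact ⟨fun h => ⟨⟨h.1, mem_insert_of_mem hz, hXT h.2⟩, h.2⟩,
        fun h => ⟨h.1.1, h.2⟩⟩
    exact this ▸ hXcard z hzX hzv
  · obtain ⟨x, hxX, hvx⟩ := hXroot hvX
    obtain ⟨u, hu⟩ := card_eq_one.mp hU
    obtain ⟨hvu, huD⟩ := mem_sdiff.mp (hu ▸ mem_singleton_self u)
    have hxD : x ∈ D := by
      obtain ⟨hvx, -, hxT⟩ := (hH v x).mp hvx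
      exact (mem_filter.mp ((mem_insert.mp hxT).resolve_left hvx.ne.symm)).1
    have hsub : {u, x} ⊆ G.neighborFinset v \ (insert v D \ X) := by
      intro y hy
      simp only [mem_insert, mem_singleton] at hy
      rcases hy with rfl | rfl
      · refine mem_sdiff.mpr ⟨hvu, fun h => ?_⟩
        rcases mem_insert.mp (mem_sdiff.mp h).1 with h | h
        · exact (G.mem_neighborFinset v y).mp hvu |>.ne h.symm
        · exact huD h
      · exact mem_sdiff.mpr ⟨(G.mem_neighborFinset v y).mpr ((hH v y).mp hvx).1,
          fun h => (mem_sdiff.mp h).2 hxX⟩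
    have := card_le_card hsub
    rw [card_pair fun h : u = x => huD (h ▸ hxD)] at this
    omega

lemma IsCertDomSetDel.exists_isCertDomSet_card_le_succ (hD : IsCertDomSetDel G v D)
    (hv : G.degree v ≠ 1) : ∃ D₀, IsCertDomSet G D₀ ∧ #D₀ ≤ #D + 1 := by
  suffices h : ∃ X, IsAdmissibleExposure G v D X by
    obtain ⟨X, hX⟩ := h
    exact ⟨_, hX.isCertDomSet hD, (card_le_card sdiff_subset).trans (card_insert_le v D)⟩
  by_cases hU : #(G.neighborFinset v \ D) = 1
  · by_cases hZ : ∃ z ∈ enclosed G v D, G.Adj v z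
    · obtain ⟨z, hz, hvz⟩ := hZ
      exact exists_isAdmissibleExposure_of_adj hD hU hz hvz
    · push Not at hZ
      obtain ⟨d, hd, hvd⟩ := exists_adj_mem_of_card_sdiff_eq_one hv hU
      exact ⟨_, isAdmissibleExposure_singleton hd hvd hZ⟩
  · exact ⟨∅, isAdmissibleExposure_empty hU⟩

lemma IsCertDomSet.isCertDomSetDel_map {D : Finset {w : V | w ≠ v}}
    (hD : IsCertDomSet (G.induce {w : V | w ≠ v}) D) :
    IsCertDomSetDel G v (D.map (Function.Embedding.subtype _)) := by
  have hmem : ∀ x, x ∈ D.map (.subtype _) ↔ ∃ h : x ≠ v, ⟨x, h⟩ ∈ D := by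
    simp
  refine ⟨by simp, fun x hx => ?_, fun d hd => ?_⟩
  · have hxv : x ≠ v := fun h => hx (mem_insert.mpr (Or.inl h))
    have hxD : (⟨x, hxv⟩ : {w : V | w ≠ v}) ∉ D :=
      fun h => hx (mem_insert_of_mem ((hmem x).mpr ⟨hxv, h⟩))
    obtain ⟨u, hu, hux⟩ := hD.1 _ hxD
    exact ⟨u, mem_map_of_mem _ hu, hux⟩
  · obtain ⟨d, hdD, rfl⟩ := mem_map.mp hd
    have : ((G.induce {w : V | w ≠ v}).neighborFinset d \ D).map (Function.Embedding.subtype _) =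
        G.neighborFinset d \ insert v (D.map (Function.Embedding.subtype _)) := by
      ext x
      simp only [mem_map, mem_sdiff, mem_neighborFinset, mem_insert, hmem, not_or, not_exists]
      constructor
      · rintro ⟨a, ⟨hda, haD⟩, rfl⟩
        exact ⟨hda, a.2, fun _ => haD⟩
      · rintro ⟨hdx, hxv, hxD⟩
        exact ⟨⟨x, hxv⟩, ⟨hdx, hxD hxv⟩, rfl⟩
    change #(G.neighborFinset d \ _) ≠ 1
    rw [← this, card_map]
    exact (isCertDomSet_iff.mp hD).2 d hdD

lemma isCertDomSet_univ (G : SimpleGraph V) [DecidableRel G.Adj] : IsCertDomSet G univ :=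
  ⟨fun x hx => absurd (mem_univ x) hx, fun _ _ => Or.inl (by simp)⟩

lemma gammaCer_le_card (hD : IsCertDomSet G D) : gammaCer G ≤ #D :=
  Nat.sInf_le ⟨D, hD, rfl⟩

lemma exists_isCertDomSet_card_eq_gammaCer (G : SimpleGraph V) [DecidableRel G.Adj] :
    ∃ D, IsCertDomSet G D ∧ #D = gammaCer G :=
  Nat.sInf_mem (s := {n | ∃ D, IsCertDomSet G D ∧ #D = n})
    ⟨_, univ, isCertDomSet_univ G, rfl⟩

end Repair

end CertifiedDomination

open CertifiedDomination

theorem gammaCer_le_gammaCer_deleteVertex_add_one (G : SimpleGraph V) [DecidableRel G.Adj]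
    (v : V) (hv : G.degree v ≠ 1) :
    gammaCer G ≤ gammaCer (G.induce {w : V | w ≠ v}) + 1 := by
  obtain ⟨D, hD, hcard⟩ := exists_isCertDomSet_card_eq_gammaCer (G.induce {w : V | w ≠ v})
  obtain ⟨D₀, hD₀, hle⟩ := hD.isCertDomSetDel_map.exists_isCertDomSet_card_le_succ hv
  calc gammaCer G ≤ #D₀ := gammaCer_le_card hD₀
    _ ≤ #D + 1 := by rwa [card_map] at hle
    _ = gammaCer (G.induce {w : V | w ≠ v}) + 1 := by rw [hcard]
end

section
/- Let G be a finite simple graph with minimum degree at least one and with no weak supports (no vertex of G is adjacent to exactly one leaf). Then G is a DD2-graph; moreover, there exists a DD2-pair (D, D2) of G with |D| = γ(G). -/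
open Finset

variable {V : Type*} [Fintype V] [DecidableEq V]

/-- `X` is a 2-dominating set of `G`: every vertex outside `X` has at least two
neighbours in `X`. -/
def IsTwoDomSet (G : SimpleGraph V) [DecidableRel G.Adj] (X : Finset V) : Prop :=
  ∀ v ∉ X, 2 ≤ (G.neighborFinset v ∩ X).card

/-- `(D, D₂)` is a `DD₂`-pair of `G`. -/
def IsDD2Pair (G : SimpleGraph V) [DecidableRel G.Adj] (D D2 : Finset V) : Prop :=
  Disjoint D D2 ∧ IsDomSet G D ∧ IsTwoDomSet G D2

section Aux

variable {V : Type*} [Fintype V] [DecidableEq V]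

lemma gamma_le_card (G : SimpleGraph V) {D : Finset V} (h : IsDomSet G D) :
    gamma G ≤ D.card :=
  Nat.sInf_le ⟨D, h, rfl⟩

lemma exists_gamma_set (G : SimpleGraph V) :
    ∃ D : Finset V, IsDomSet G D ∧ D.card = gamma G := by
  have hne : {n | ∃ D : Finset V, IsDomSet G D ∧ D.card = n}.Nonempty :=
    ⟨(Finset.univ : Finset V).card, Finset.univ,
      fun v hv => absurd (Finset.mem_univ v) hv, rfl⟩
  obtain ⟨D, hD, hc⟩ := Nat.sInf_mem hne
  exact ⟨D, hD, hc⟩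

lemma exists_good_gamma_set (G : SimpleGraph V) [DecidableRel G.Adj]
    (hdeg : ∀ v : V, 1 ≤ G.degree v)
    (hws : ∀ v : V, ¬ IsWeakSupport G v) :
    ∃ D : Finset V, IsDomSet G D ∧ D.card = gamma G ∧
      ∀ v ∈ D, 2 ≤ (G.neighborFinset v \ D).card := by
  classical
  set m : Finset V → ℕ := fun D => ∑ x ∈ D, (G.neighborFinset x ∩ D).card with hm
  have hSne : {n | ∃ D : Finset V, (IsDomSet G D ∧ D.card = gamma G) ∧ m D = n}.Nonempty := by
    obtain ⟨D, hD, hc⟩ := exists_gamma_set G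
    exact ⟨m D, D, ⟨hD, hc⟩, rfl⟩
  obtain ⟨D, ⟨hdom, hcard⟩, hmD⟩ := Nat.sInf_mem hSne
  refine ⟨D, hdom, hcard, ?_⟩
  by_contra hbad
  push_neg at hbad
  obtain ⟨v, hvD, hv1⟩ := hbad
  have hDpos : 1 ≤ D.card := Finset.card_pos.2 ⟨v, hvD⟩
  have hv01 : (G.neighborFinset v \ D).card = 0 ∨ (G.neighborFinset v \ D).card = 1 := by omega
  rcases hv01 with h0 | h1
  · -- Case 0 : all neighbours of v are in D, then D.erase v is dominating.
    have hsub : G.neighborFinset v \ D = ∅ := Finset.card_eq_zero.mp h0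
    have hNin : ∀ w, G.Adj v w → w ∈ D := by
      intro w hw
      by_contra hwD
      have : w ∈ G.neighborFinset v \ D :=
        Finset.mem_sdiff.2 ⟨(G.mem_neighborFinset v w).2 hw, hwD⟩
      simp [hsub] at this
    obtain ⟨y, hy⟩ : (G.neighborFinset v).Nonempty :=
      Finset.card_pos.1 (hdeg v)
    have hadjvy : G.Adj v y := (G.mem_neighborFinset v y).1 hy
    have hyD : y ∈ D := hNin y hadjvy
    have hyv : y ≠ v := fun h => G.irrefl (h ▸ hadjvy)
    have hdom0 : IsDomSet G (D.erase v) := by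
      intro w hw
      by_cases hwv : w = v
      · exact ⟨y, Finset.mem_erase.2 ⟨hyv, hyD⟩, hwv ▸ hadjvy.symm⟩
      · have hwD : w ∉ D := fun h => hw (Finset.mem_erase.2 ⟨hwv, h⟩)
        obtain ⟨d, hdD, hadj⟩ := hdom w hwD
        have hdv : d ≠ v := by
          rintro rfl
          exact hwD (hNin w hadj)
        exact ⟨d, Finset.mem_erase.2 ⟨hdv, hdD⟩, hadj⟩
    have hle := gamma_le_card G hdom0
    rw [Finset.card_erase_of_mem hvD] at hle
    omega
  · -- Case 1 : exactly one neighbour u of v outside D.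
    obtain ⟨u, hu⟩ := Finset.card_eq_one.mp h1
    have humem : u ∈ G.neighborFinset v \ D := hu ▸ Finset.mem_singleton_self u
    have hadjvu : G.Adj v u := (G.mem_neighborFinset v u).1 (Finset.mem_sdiff.1 humem).1
    have huD : u ∉ D := (Finset.mem_sdiff.1 humem).2
    have huniq : ∀ w, G.Adj v w → w ∉ D → w = u := by
      intro w hadj hwD
      have : w ∈ G.neighborFinset v \ D :=
        Finset.mem_sdiff.2 ⟨(G.mem_neighborFinset v w).2 hadj, hwD⟩
      rw [hu] at this
      exact Finset.mem_singleton.1 this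
    by_cases hleaf : G.degree v = 1
    · -- v is a leaf with support u; use no-weak-support.
      have hNveq : G.neighborFinset v = {u} := by
        have hc1 : (G.neighborFinset v).card = 1 := hleaf
        obtain ⟨a, ha⟩ := Finset.card_eq_one.mp hc1
        have hua : u ∈ ({a} : Finset V) := ha ▸ (G.mem_neighborFinset v u).2 hadjvu
        rw [Finset.mem_singleton] at hua
        rw [ha, hua]
      have hvleafnbr : v ∈ leafNbrs G u :=
        Finset.mem_filter.2 ⟨(G.mem_neighborFinset u v).2 hadjvu.symm, hleaf⟩
      have hlcard : 1 < (leafNbrs G u).card := by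
        have h1le : 1 ≤ (leafNbrs G u).card := Finset.card_pos.2 ⟨v, hvleafnbr⟩
        have := hws u
        unfold IsWeakSupport at this
        omega
      obtain ⟨l, hlmem, hlv⟩ := Finset.exists_mem_ne hlcard v
      have hadjul : G.Adj u l := (G.mem_neighborFinset u l).1 (Finset.mem_filter.1 hlmem).1
      have hldeg : G.degree l = 1 := (Finset.mem_filter.1 hlmem).2
      have hNleq : G.neighborFinset l = {u} := by
        have hc1 : (G.neighborFinset l).card = 1 := hldeg
        obtain ⟨a, ha⟩ := Finset.card_eq_one.mp hc1
        have hua : u ∈ ({a} : Finset V) := ha ▸ (G.mem_neighborFinset l u).2 hadjul.symm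
        rw [Finset.mem_singleton] at hua
        rw [ha, hua]
      have hNlin : ∀ w, G.Adj l w → w = u := by
        intro w hw
        have : w ∈ G.neighborFinset l := (G.mem_neighborFinset l w).2 hw
        rw [hNleq] at this
        exact Finset.mem_singleton.1 this
      have hlD : l ∈ D := by
        by_contra hlD
        obtain ⟨d, hdD, hadj⟩ := hdom l hlD
        have : d = u := hNlin d hadj.symm
        exact huD (this ▸ hdD)
      have huv : u ≠ v := fun h => G.irrefl (h ▸ hadjvu)
      have hul : u ≠ l := fun h => G.irrefl (h ▸ hadjul)
      -- smaller dominating set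
      set D0 : Finset V := insert u ((D.erase v).erase l) with hD0
      have hvel : v ∈ D.erase l := Finset.mem_erase.2 ⟨fun h => hlv h.symm, hvD⟩
      have hdom0 : IsDomSet G D0 := by
        intro w hw
        have hwu : w ≠ u := by
          intro h
          rw [h] at hw
          exact hw (Finset.mem_insert_self u _)
        by_cases hwv : w = v
        · exact ⟨u, Finset.mem_insert_self u _, hwv ▸ hadjvu.symm⟩
        by_cases hwl : w = l
        · exact ⟨u, Finset.mem_insert_self u _, hwl ▸ hadjul⟩
        have hwD : w ∉ D := fun h =>
          hw (Finset.mem_insert.2 (Or.inr (Finset.mem_erase.2 ⟨hwl,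
            Finset.mem_erase.2 ⟨hwv, h⟩⟩)))
        obtain ⟨d, hdD, hadj⟩ := hdom w hwD
        have hdv : d ≠ v := by
          rintro rfl
          exact hwu (huniq w hadj hwD)
        have hdl : d ≠ l := by
          rintro rfl
          exact hwu (hNlin w hadj)
        exact ⟨d, Finset.mem_insert.2 (Or.inr (Finset.mem_erase.2 ⟨hdl,
          Finset.mem_erase.2 ⟨hdv, hdD⟩⟩)), hadj⟩
      have hle := gamma_le_card G hdom0
      have hucard : u ∉ (D.erase v).erase l := by
        intro h
        exact huD (Finset.mem_of_mem_erase (Finset.mem_of_mem_erase h))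
      have hlev : l ∈ D.erase v := Finset.mem_erase.2 ⟨hlv, hlD⟩
      have hcard0 : D0.card = ((D.erase v).erase l).card + 1 :=
        Finset.card_insert_of_notMem hucard
      have h2le : 2 ≤ D.card := Finset.one_lt_card.2 ⟨v, hvD, l, hlD, fun h => hlv h.symm⟩
      rw [Finset.card_erase_of_mem hlev, Finset.card_erase_of_mem hvD] at hcard0
      omega
    · -- v is not a leaf : has a neighbour inside D too.
      have hdegv : 2 ≤ G.degree v := by have := hdeg v; omega
      have hcardsplit : (G.neighborFinset v ∩ D).card + (G.neighborFinset v \ D).card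
          = (G.neighborFinset v).card := Finset.card_inter_add_card_sdiff _ _
      have hdegeq : (G.neighborFinset v).card = G.degree v := rfl
      have hNvDpos : 1 ≤ (G.neighborFinset v ∩ D).card := by omega
      obtain ⟨z, hz⟩ := Finset.card_pos.1 hNvDpos
      have hadjvz : G.Adj v z := (G.mem_neighborFinset v z).1 (Finset.mem_inter.1 hz).1
      have hzD : z ∈ D := (Finset.mem_inter.1 hz).2
      have hzv : z ≠ v := fun h => G.irrefl (h ▸ hadjvz)
      by_cases hyp : (G.neighborFinset u ∩ D.erase v).Nonempty
      · -- u is dominated by someone else : D.erase v is dominating.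
        obtain ⟨y, hy⟩ := hyp
        have hadjuy : G.Adj u y := (G.mem_neighborFinset u y).1 (Finset.mem_inter.1 hy).1
        have hyDe : y ∈ D.erase v := (Finset.mem_inter.1 hy).2
        have hdom0 : IsDomSet G (D.erase v) := by
          intro w hw
          by_cases hwv : w = v
          · exact ⟨z, Finset.mem_erase.2 ⟨hzv, hzD⟩, hwv ▸ hadjvz.symm⟩
          · have hwD : w ∉ D := fun h => hw (Finset.mem_erase.2 ⟨hwv, h⟩)
            obtain ⟨d, hdD, hadj⟩ := hdom w hwD
            by_cases hdv : d = v
            · have hwu : w = u := huniq w (hdv ▸ hadj) hwD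
              exact ⟨y, hyDe, hwu ▸ hadjuy.symm⟩
            · exact ⟨d, Finset.mem_erase.2 ⟨hdv, hdD⟩, hadj⟩
        have hle := gamma_le_card G hdom0
        rw [Finset.card_erase_of_mem hvD] at hle
        omega
      · -- u has no neighbour in D other than v : swapping v for u decreases m.
        rw [Finset.not_nonempty_iff_eq_empty] at hyp
        set D' : Finset V := insert u (D.erase v) with hD'
        have huev : u ∉ D.erase v := fun h => huD (Finset.mem_of_mem_erase h)
        have hdom' : IsDomSet G D' := by
          intro w hw
          have hwu : w ≠ u := by
            intro h
            rw [h] at hw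
            exact hw (Finset.mem_insert_self u _)
          by_cases hwv : w = v
          · exact ⟨u, Finset.mem_insert_self u _, hwv ▸ hadjvu.symm⟩
          · have hwD : w ∉ D := fun h =>
              hw (Finset.mem_insert.2 (Or.inr (Finset.mem_erase.2 ⟨hwv, h⟩)))
            obtain ⟨d, hdD, hadj⟩ := hdom w hwD
            by_cases hdv : d = v
            · exact absurd (huniq w (hdv ▸ hadj) hwD) hwu
            · exact ⟨d, Finset.mem_insert.2 (Or.inr (Finset.mem_erase.2 ⟨hdv, hdD⟩)), hadj⟩
        have hcard' : D'.card = D.card := by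
          rw [hD', Finset.card_insert_of_notMem huev, Finset.card_erase_of_mem hvD]
          omega
        -- minimality of m
        have hmin : m D ≤ m D' :=
          hmD ▸ Nat.sInf_le ⟨D', ⟨hdom', hcard' ▸ hcard⟩, rfl⟩
        -- compute m D'
        have hNuD' : G.neighborFinset u ∩ D' = ∅ := by
          apply Finset.eq_empty_iff_forall_notMem.2
          intro x hx
          obtain ⟨hx1, hx2⟩ := Finset.mem_inter.1 hx
          rcases Finset.mem_insert.1 hx2 with h | h
          · exact G.irrefl (((G.mem_neighborFinset u x).1 hx1).symm.symm
              |> fun ha => h ▸ ha)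
          · have : x ∈ G.neighborFinset u ∩ D.erase v := Finset.mem_inter.2 ⟨hx1, h⟩
            simp [hyp] at this
        have hxint : ∀ x ∈ D.erase v,
            G.neighborFinset x ∩ D' = G.neighborFinset x ∩ D.erase v := by
          intro x hx
          rw [hD']
          apply Finset.inter_insert_of_notMem
          intro hu'
          have hxu : G.Adj u x := ((G.mem_neighborFinset x u).1 hu').symm
          have : x ∈ G.neighborFinset u ∩ D.erase v :=
            Finset.mem_inter.2 ⟨(G.mem_neighborFinset u x).2 hxu, hx⟩
          simp [hyp] at this
        have hmD' : m D' = ∑ x ∈ D.erase v, (G.neighborFinset x ∩ D.erase v).card := by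
          rw [hm]
          simp only
          rw [hD', Finset.sum_insert huev]
          rw [← hD', hNuD']
          simp only [Finset.card_empty, Nat.zero_add]
          apply Finset.sum_congr rfl
          intro x hx
          rw [hxint x hx]
        have hsumle : ∑ x ∈ D.erase v, (G.neighborFinset x ∩ D.erase v).card
            ≤ ∑ x ∈ D.erase v, (G.neighborFinset x ∩ D).card := by
          apply Finset.sum_le_sum
          intro x _
          exact Finset.card_le_card
            (Finset.inter_subset_inter_left (Finset.erase_subset v D))
        have hmDsplit : (G.neighborFinset v ∩ D).card
            + ∑ x ∈ D.erase v, (G.neighborFinset x ∩ D).card = m D :=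
          Finset.add_sum_erase D (fun x => (G.neighborFinset x ∩ D).card) hvD
        omega

end Aux

theorem dd2_of_no_weakSupport (G : SimpleGraph V) [DecidableRel G.Adj]
    (hdeg : ∀ v : V, 1 ≤ G.degree v)
    (hws : ∀ v : V, ¬ IsWeakSupport G v) :
    (∃ D D2 : Finset V, IsDD2Pair G D D2) ∧
      ∃ D D2 : Finset V, IsDD2Pair G D D2 ∧ D.card = gamma G := by
  obtain ⟨D, hdom, hcard, h2⟩ := exists_good_gamma_set G hdeg hws
  have hpair : IsDD2Pair G D (Finset.univ \ D) := by
    refine ⟨Finset.disjoint_sdiff, hdom, ?_⟩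
    intro w hw
    have hwD : w ∈ D := by
      by_contra h
      exact hw (Finset.mem_sdiff.2 ⟨Finset.mem_univ w, h⟩)
    have heq : G.neighborFinset w ∩ (Finset.univ \ D) = G.neighborFinset w \ D := by
      ext x
      simp [Finset.mem_sdiff, Finset.mem_inter]
    rw [heq]
    exact h2 w hwD
  exact ⟨⟨D, _, hpair⟩, D, _, hpair, hcard⟩
end
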